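/- For s ≥ 0 there is a constant C with ‖φ(D)(fg)‖_{H^s(𝕋)} ≤ C ‖f‖_{H^s(𝕋)} ‖g‖_{H^s(𝕋)}, where φ(D) = -(1-∂ₓ²)^{-1}∂ₓ. -/
import Mathlib


open scoped Pointwise

/-- The BBM Fourier multiplier symbol `φ(n) = -i n / (1 + n²)`. -/
noncomputable def phiSym (n : ℤ) : ℂ := (-Complex.I * (n : ℂ)) / (1 + (n : ℂ) ^ 2)

/-- The Japanese bracket `⟨n⟩ = √(1 + n²)`. -/
noncomputable def jbr (n : ℤ) : ℝ := Real.sqrt (1 + (n : ℝ) ^ 2)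

/-- Fourier coefficients of the product of trigonometric polynomials with
coefficients `c` (supported in `S`) and `b` (supported in `T`). -/
noncomputable def prodCoeff (S T : Finset ℤ) (c b : ℤ → ℂ) : ℤ → ℂ :=
  fun m => ∑ n ∈ S, if m - n ∈ T then c n * b (m - n) else 0

/-- The `H^s(𝕋)` norm of a trigonometric polynomial with coefficients `c`
supported in `S`. -/
noncomputable def hsNorm (s : ℝ) (S : Finset ℤ) (c : ℤ → ℂ) : ℝ :=
  Real.sqrt (∑ n ∈ S, jbr n ^ (2 * s) * ‖c n‖ ^ 2)

lemma jbr_pos (n : ℤ) : 0 < jbr n := by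
  unfold jbr
  apply Real.sqrt_pos.2
  positivity

lemma jbr_sq (n : ℤ) : jbr n ^ 2 = 1 + (n : ℝ) ^ 2 := by
  unfold jbr
  rw [Real.sq_sqrt]
  positivity

lemma jbr_rpow_two_mul (s : ℝ) (n : ℤ) : jbr n ^ (2 * s) = (jbr n ^ s) ^ 2 := by
  rw [two_mul, Real.rpow_add (jbr_pos n), sq]

/-- `⟨n+k⟩ ≤ √2 ⟨n⟩ ⟨k⟩`. -/
lemma jbr_add_le (n k : ℤ) : jbr (n + k) ≤ Real.sqrt 2 * jbr n * jbr k := by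
  unfold jbr
  rw [← Real.sqrt_mul (by norm_num) (1 + (n : ℝ) ^ 2),
    ← Real.sqrt_mul (by positivity) (1 + (k : ℝ) ^ 2)]
  apply Real.sqrt_le_sqrt
  push_cast
  nlinarith [sq_nonneg ((n : ℝ) - k), sq_nonneg ((n : ℝ) * k)]

lemma jbr_rpow_add_le (s : ℝ) (hs : 0 ≤ s) (n k : ℤ) :
    jbr (n + k) ^ s ≤ Real.sqrt 2 ^ s * jbr n ^ s * jbr k ^ s := by
  have h := Real.rpow_le_rpow (Real.sqrt_nonneg _) (jbr_add_le n k) hs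
  rwa [Real.mul_rpow (mul_nonneg (Real.sqrt_nonneg 2) (jbr_pos n).le) (jbr_pos k).le,
    Real.mul_rpow (Real.sqrt_nonneg 2) (jbr_pos n).le] at h

/-- `‖φ(m)‖ ≤ 1/⟨m⟩`. -/
lemma phiSym_norm_le (m : ℤ) : ‖phiSym m‖ ≤ 1 / jbr m := by
  have h1 : ((1 : ℂ) + (m : ℂ) ^ 2) = ((1 + (m : ℝ) ^ 2 : ℝ) : ℂ) := by push_cast; ring
  have h2 : ‖phiSym m‖ = |(m : ℝ)| / (1 + (m : ℝ) ^ 2) := by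
    unfold phiSym
    rw [h1, norm_div, norm_mul, norm_neg, Complex.norm_I, one_mul, Complex.norm_real,
      Real.norm_eq_abs, abs_of_pos (by positivity), Complex.norm_intCast]
  rw [h2]
  have h3 : |(m : ℝ)| ≤ jbr m := by
    rw [← Real.sqrt_sq_eq_abs]
    exact Real.sqrt_le_sqrt (by nlinarith)
  have h4 := jbr_pos m
  have h5 := jbr_sq m
  rw [div_le_div_iff₀ (by positivity) h4]
  nlinarith

lemma hsNorm_nonneg (s : ℝ) (S : Finset ℤ) (c : ℤ → ℂ) : 0 ≤ hsNorm s S c :=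
  Real.sqrt_nonneg _

lemma hsNorm_sq (s : ℝ) (S : Finset ℤ) (c : ℤ → ℂ) :
    hsNorm s S c ^ 2 = ∑ n ∈ S, jbr n ^ (2 * s) * ‖c n‖ ^ 2 := by
  unfold hsNorm
  rw [Real.sq_sqrt]
  apply Finset.sum_nonneg
  intro n _
  have := jbr_pos n
  positivity

lemma summable_inv_one_add_sq : Summable fun m : ℤ => 1 / (1 + (m : ℝ) ^ 2) := by
  have h1 : Summable fun m : ℤ => 1 / (m : ℝ) ^ 2 :=
    Real.summable_one_div_int_pow.2 one_lt_two
  have h2 : Summable fun m : ℤ => (if m = 0 then (1 : ℝ) else 0) := by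
    apply summable_of_ne_finset_zero (s := ({0} : Finset ℤ))
    intro b hb
    simp only [Finset.mem_singleton] at hb
    simp [hb]
  refine Summable.of_nonneg_of_le (fun m => by positivity) ?_ (h1.add h2)
  intro m
  by_cases hm : m = 0
  · subst hm; norm_num
  · have hm' : ((m : ℝ)) ≠ 0 := Int.cast_ne_zero.2 hm
    simp only [hm, if_false, add_zero]
    apply one_div_le_one_div_of_le (by positivity)
    nlinarith [sq_nonneg (m : ℝ)]

/-- Cauchy–Schwarz step. -/
lemma conv_sum_le (s : ℝ) (S T : Finset ℤ) (c b : ℤ → ℂ) (m : ℤ) :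
    ∑ n ∈ S, (jbr n ^ s * ‖c n‖) *
        (if m - n ∈ T then jbr (m - n) ^ s * ‖b (m - n)‖ else 0)
      ≤ hsNorm s S c * hsNorm s T b := by
  set f : ℤ → ℝ := fun n => jbr n ^ s * ‖c n‖ with hf
  set g : ℤ → ℝ := fun n => if m - n ∈ T then jbr (m - n) ^ s * ‖b (m - n)‖ else 0 with hg
  have hfnn : ∀ n, 0 ≤ f n := fun n => by
    have := jbr_pos n; positivity
  have hgnn : ∀ n, 0 ≤ g n := fun n => by
    simp only [hg]
    split_ifs with h
    · have := jbr_pos (m - n); positivity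
    · exact le_refl 0
  have hCS := Finset.sum_mul_sq_le_sq_mul_sq S f g
  have hfsq : ∑ n ∈ S, f n ^ 2 = hsNorm s S c ^ 2 := by
    rw [hsNorm_sq]
    refine Finset.sum_congr rfl fun n _ => ?_
    simp only [hf, mul_pow, jbr_rpow_two_mul]
  have hgsq : ∑ n ∈ S, g n ^ 2 ≤ hsNorm s T b ^ 2 := by
    rw [hsNorm_sq]
    have e1 : ∑ n ∈ S, g n ^ 2
        = ∑ n ∈ S.filter (fun n => m - n ∈ T), (jbr (m - n) ^ s * ‖b (m - n)‖) ^ 2 := by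
      rw [Finset.sum_filter]
      refine Finset.sum_congr rfl fun n _ => ?_
      simp only [hg]
      split_ifs <;> simp
    have hinj : Set.InjOn (fun n => m - n) (S.filter (fun n => m - n ∈ T)) := by
      intro x _ y _ h
      dsimp only at h
      omega
    have e2 : ∑ n ∈ S.filter (fun n => m - n ∈ T), (jbr (m - n) ^ s * ‖b (m - n)‖) ^ 2
        = ∑ k ∈ (S.filter (fun n => m - n ∈ T)).image (fun n => m - n),
            (jbr k ^ s * ‖b k‖) ^ 2 := by
      rw [Finset.sum_image hinj]
    rw [e1, e2]
    have hsub : (S.filter (fun n => m - n ∈ T)).image (fun n => m - n) ⊆ T := by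
      intro k hk
      simp only [Finset.mem_image, Finset.mem_filter] at hk
      obtain ⟨n, ⟨_, hn⟩, rfl⟩ := hk
      exact hn
    calc ∑ k ∈ (S.filter (fun n => m - n ∈ T)).image (fun n => m - n),
            (jbr k ^ s * ‖b k‖) ^ 2
        ≤ ∑ k ∈ T, (jbr k ^ s * ‖b k‖) ^ 2 := by
          apply Finset.sum_le_sum_of_subset_of_nonneg hsub
          intro k _ _
          positivity
      _ = ∑ k ∈ T, jbr k ^ (2 * s) * ‖b k‖ ^ 2 := by
          refine Finset.sum_congr rfl fun k _ => ?_
          rw [mul_pow, jbr_rpow_two_mul]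
  have hsum_nn : 0 ≤ ∑ n ∈ S, f n * g n :=
    Finset.sum_nonneg fun n _ => mul_nonneg (hfnn n) (hgnn n)
  have hAB : 0 ≤ hsNorm s S c * hsNorm s T b :=
    mul_nonneg (hsNorm_nonneg s S c) (hsNorm_nonneg s T b)
  have hsq : (∑ n ∈ S, f n * g n) ^ 2 ≤ (hsNorm s S c * hsNorm s T b) ^ 2 := by
    calc (∑ n ∈ S, f n * g n) ^ 2 ≤ (∑ n ∈ S, f n ^ 2) * ∑ n ∈ S, g n ^ 2 := hCS
      _ ≤ hsNorm s S c ^ 2 * hsNorm s T b ^ 2 := by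
          apply mul_le_mul (le_of_eq hfsq) hgsq
          · exact Finset.sum_nonneg fun n _ => sq_nonneg _
          · exact sq_nonneg _
      _ = (hsNorm s S c * hsNorm s T b) ^ 2 := by ring
  have final : ∑ n ∈ S, f n * g n ≤ hsNorm s S c * hsNorm s T b := by
    calc ∑ n ∈ S, f n * g n = Real.sqrt ((∑ n ∈ S, f n * g n) ^ 2) :=
          (Real.sqrt_sq hsum_nn).symm
      _ ≤ Real.sqrt ((hsNorm s S c * hsNorm s T b) ^ 2) := Real.sqrt_le_sqrt hsq
      _ = hsNorm s S c * hsNorm s T b := Real.sqrt_sq hAB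
  exact final

/-- Pointwise (in `m`) estimate. -/
lemma pointwise_est (s : ℝ) (hs : 0 ≤ s) (S T : Finset ℤ) (c b : ℤ → ℂ) (m : ℤ) :
    jbr m ^ s * ‖phiSym m * prodCoeff S T c b m‖
      ≤ (Real.sqrt 2 ^ s / jbr m) * (hsNorm s S c * hsNorm s T b) := by
  have hjm := jbr_pos m
  have h1 : ‖prodCoeff S T c b m‖
      ≤ ∑ n ∈ S, (if m - n ∈ T then ‖c n‖ * ‖b (m - n)‖ else 0) := by
    refine (norm_sum_le _ _).trans (le_of_eq (Finset.sum_congr rfl fun n _ => ?_))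
    split_ifs <;> simp
  have h2 : jbr m ^ s * ∑ n ∈ S, (if m - n ∈ T then ‖c n‖ * ‖b (m - n)‖ else 0)
      ≤ Real.sqrt 2 ^ s * ∑ n ∈ S, (jbr n ^ s * ‖c n‖) *
          (if m - n ∈ T then jbr (m - n) ^ s * ‖b (m - n)‖ else 0) := by
    rw [Finset.mul_sum, Finset.mul_sum]
    apply Finset.sum_le_sum
    intro n _
    split_ifs with h
    · have hm : m = n + (m - n) := by ring
      have hb := jbr_rpow_add_le s hs n (m - n)
      rw [← hm] at hb
      have hnn : (0 : ℝ) ≤ ‖c n‖ * ‖b (m - n)‖ := by positivity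
      calc jbr m ^ s * (‖c n‖ * ‖b (m - n)‖)
          ≤ (Real.sqrt 2 ^ s * jbr n ^ s * jbr (m - n) ^ s) * (‖c n‖ * ‖b (m - n)‖) :=
            mul_le_mul_of_nonneg_right hb hnn
        _ = Real.sqrt 2 ^ s * ((jbr n ^ s * ‖c n‖) * (jbr (m - n) ^ s * ‖b (m - n)‖)) := by
            ring
    · simp
  have hphi := phiSym_norm_le m
  have hjs : (0 : ℝ) ≤ jbr m ^ s := (Real.rpow_nonneg hjm.le s)
  have hsum_nn : (0 : ℝ) ≤ ∑ n ∈ S, (if m - n ∈ T then ‖c n‖ * ‖b (m - n)‖ else 0) := by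
    apply Finset.sum_nonneg
    intro n _
    split_ifs <;> positivity
  have hc2 : (0 : ℝ) ≤ Real.sqrt 2 ^ s := Real.rpow_nonneg (Real.sqrt_nonneg 2) s
  calc jbr m ^ s * ‖phiSym m * prodCoeff S T c b m‖
      = ‖phiSym m‖ * (jbr m ^ s * ‖prodCoeff S T c b m‖) := by
        rw [norm_mul]; ring
    _ ≤ (1 / jbr m) * (jbr m ^ s *
          ∑ n ∈ S, (if m - n ∈ T then ‖c n‖ * ‖b (m - n)‖ else 0)) := by
        apply mul_le_mul hphi (mul_le_mul_of_nonneg_left h1 hjs)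
          (mul_nonneg hjs (norm_nonneg _)) (by positivity)
    _ ≤ (1 / jbr m) * (Real.sqrt 2 ^ s * ∑ n ∈ S, (jbr n ^ s * ‖c n‖) *
          (if m - n ∈ T then jbr (m - n) ^ s * ‖b (m - n)‖ else 0)) :=
        mul_le_mul_of_nonneg_left h2 (by positivity)
    _ ≤ (1 / jbr m) * (Real.sqrt 2 ^ s * (hsNorm s S c * hsNorm s T b)) := by
        apply mul_le_mul_of_nonneg_left
          (mul_le_mul_of_nonneg_left (conv_sum_le s S T c b m) hc2) (by positivity)
    _ = (Real.sqrt 2 ^ s / jbr m) * (hsNorm s S c * hsNorm s T b) := by ring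

/-- For `s ≥ 0`, `‖φ(D)(fg)‖_{H^s(𝕋)} ≤ C ‖f‖_{H^s(𝕋)} ‖g‖_{H^s(𝕋)}`. -/
theorem phiD_product_estimate (s : ℝ) (hs : 0 ≤ s) :
    ∃ C : ℝ, 0 < C ∧ ∀ (S T : Finset ℤ) (c b : ℤ → ℂ),
      hsNorm s (S + T) (fun m => phiSym m * prodCoeff S T c b m)
        ≤ C * hsNorm s S c * hsNorm s T b := by
  set K : ℝ := ∑' m : ℤ, 1 / (1 + (m : ℝ) ^ 2) with hK
  have hKsummable := summable_inv_one_add_sq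
  have hK0 : 0 ≤ K := tsum_nonneg fun m => by positivity
  have hc2 : (0 : ℝ) < Real.sqrt 2 ^ s :=
    Real.rpow_pos_of_pos (Real.sqrt_pos.2 two_pos) s
  refine ⟨Real.sqrt 2 ^ s * Real.sqrt (K + 1), ?_, ?_⟩
  · exact mul_pos hc2 (Real.sqrt_pos.2 (by linarith))
  intro S T c b
  set C : ℝ := Real.sqrt 2 ^ s * Real.sqrt (K + 1) with hC
  set A : ℝ := hsNorm s S c with hA
  set B : ℝ := hsNorm s T b with hB
  have hA0 : 0 ≤ A := hsNorm_nonneg s S c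
  have hB0 : 0 ≤ B := hsNorm_nonneg s T b
  have key : ∑ m ∈ S + T, jbr m ^ (2 * s) *
      ‖phiSym m * prodCoeff S T c b m‖ ^ 2 ≤ (C * A * B) ^ 2 := by
    calc ∑ m ∈ S + T, jbr m ^ (2 * s) * ‖phiSym m * prodCoeff S T c b m‖ ^ 2
        ≤ ∑ m ∈ S + T, ((Real.sqrt 2 ^ s / jbr m) * (A * B)) ^ 2 := by
          apply Finset.sum_le_sum
          intro m _
          rw [jbr_rpow_two_mul, ← mul_pow]
          have := jbr_pos m
          exact pow_le_pow_left₀ (by positivity) (pointwise_est s hs S T c b m) 2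
      _ = (Real.sqrt 2 ^ s * (A * B)) ^ 2 * ∑ m ∈ S + T, 1 / (1 + (m : ℝ) ^ 2) := by
          rw [Finset.mul_sum]
          refine Finset.sum_congr rfl fun m _ => ?_
          rw [div_mul_eq_mul_div, div_pow, jbr_sq m, div_eq_mul_one_div]
      _ ≤ (Real.sqrt 2 ^ s * (A * B)) ^ 2 * (K + 1) := by
          apply mul_le_mul_of_nonneg_left ?_ (sq_nonneg _)
          have hle := Summable.sum_le_tsum (S + T) (fun m _ => by positivity) hKsummable
          rw [← hK] at hle
          linarith
      _ = (C * A * B) ^ 2 := by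
          have h2 : Real.sqrt (K + 1) ^ 2 = K + 1 := Real.sq_sqrt (by linarith)
          rw [hC, show (Real.sqrt 2 ^ s * Real.sqrt (K + 1) * A * B) ^ 2
            = (Real.sqrt 2 ^ s * (A * B)) ^ 2 * Real.sqrt (K + 1) ^ 2 from by ring, h2]
  calc hsNorm s (S + T) (fun m => phiSym m * prodCoeff S T c b m)
      = Real.sqrt (∑ m ∈ S + T, jbr m ^ (2 * s) *
          ‖phiSym m * prodCoeff S T c b m‖ ^ 2) := rfl
    _ ≤ Real.sqrt ((C * A * B) ^ 2) := Real.sqrt_le_sqrt key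
    _ = C * A * B := Real.sqrt_sq (by positivity)
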